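/- arXiv:2402.11263 — 3 statements merged into one kernel-verified Lean document; each statement's English description precedes it below -/
import Mathlib

section
/- Let (X, d) be a compact metric space, f : X → X a continuous map, and (μ_{n_k}) a sequence of Borel probability measures converging weakly to a Borel probability measure μ. Suppose for each j ≥ 0 a set H_j is given, each H_j either empty or a singleton, and let H_∞ = ⋂_{m≥1} closure(⋃_{j≥m} H_j). If there is θ > 0 such that μ_{n_k}(⋃_{0≤j≤n_k−1} H_j) > θ for all k, and each μ_{n_k} assigns mass at most 1/n_k to any singleton, then μ(H_∞) ≥ limsup_k μ_{n_k}(⋃_{0≤j≤n_k−1} H_j) ≥ θ. -/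
open MeasureTheory Filter Topology
open scoped ENNReal

/-!
Split `⋃_{j < n_k} H_j` into the first `m` sets, of total `ν_k`-mass at most `m / n_k → 0`
since each is at most a point, and the rest, which lies in the closed set
`closure (⋃_{j ≥ m} H_j)`. Portmanteau bounds the limsup of the masses of that closed set by its
`μ`-mass, and letting `m → ∞` along these decreasing closed sets gives `μ(H_∞)`.
-/

theorem MeasureTheory.measure_biUnion_le_card_mul {α ι : Type*} [MeasurableSpace α]
    (ν : Measure α) {H : ι → Set α} (hH : ∀ j, (H j).Subsingleton) {c : ℝ≥0∞}
    (hc : ∀ x, ν {x} ≤ c) (s : Finset ι) :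
    ν (⋃ j ∈ s, H j) ≤ s.card * c :=
  calc ν (⋃ j ∈ s, H j) ≤ ∑ j ∈ s, ν (H j) := measure_biUnion_finset_le _ _
    _ ≤ ∑ _j ∈ s, c :=
        Finset.sum_le_sum fun j _ => (hH j).induction_on (p := fun t => ν t ≤ c) (by simp) hc
    _ = s.card * c := by rw [Finset.sum_const, nsmul_eq_mul]

theorem Set.biUnion_range_subset_union_biUnion_Ici {α : Type*} (H : ℕ → Set α) (m N : ℕ) :
    ⋃ j ∈ Finset.range N, H j ⊆ (⋃ j ∈ Finset.range m, H j) ∪ ⋃ j ∈ Set.Ici m, H j := by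
  refine Set.iUnion₂_subset fun j _ x hx => ?_
  rcases lt_or_ge j m with hjm | hjm
  · exact Or.inl (Set.mem_biUnion (Finset.mem_range.2 hjm) hx)
  · exact Or.inr (Set.mem_biUnion hjm hx)

theorem MeasureTheory.ProbabilityMeasure.limsup_measure_biUnion_range_le {X : Type*}
    [TopologicalSpace X] [HasOuterApproxClosed X] [MeasurableSpace X] [OpensMeasurableSpace X]
    {ν : ℕ → ProbabilityMeasure X} {μ : ProbabilityMeasure X} (hconv : Tendsto ν atTop (𝓝 μ))
    {n : ℕ → ℕ} (hn : Tendsto n atTop atTop) {H : ℕ → Set X} (hH : ∀ j, (H j).Subsingleton)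
    (hsingle : ∀ k (x : X), (ν k : Measure X) {x} ≤ 1 / (n k : ℝ≥0∞)) (m : ℕ) :
    limsup (fun k => (ν k : Measure X) (⋃ j ∈ Finset.range (n k), H j)) atTop ≤
      (μ : Measure X) (closure (⋃ j ∈ Set.Ici m, H j)) := by
  set T := closure (⋃ j ∈ Set.Ici m, H j)
  have hbound : ∀ k, (ν k : Measure X) (⋃ j ∈ Finset.range (n k), H j) ≤
      m * (1 / (n k : ℝ≥0∞)) + (ν k : Measure X) T := fun k =>
    calc (ν k : Measure X) (⋃ j ∈ Finset.range (n k), H j)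
        ≤ (ν k : Measure X) ((⋃ j ∈ Finset.range m, H j) ∪ T) :=
          measure_mono <| (Set.biUnion_range_subset_union_biUnion_Ici H m (n k)).trans
            (Set.union_subset_union_right _ subset_closure)
      _ ≤ (ν k : Measure X) (⋃ j ∈ Finset.range m, H j) + (ν k : Measure X) T :=
          measure_union_le _ _
      _ ≤ m * (1 / (n k : ℝ≥0∞)) + (ν k : Measure X) T := by
          gcongr
          simpa using measure_biUnion_le_card_mul _ hH (hsingle k) (Finset.range m)
  have hsmall : Tendsto (fun k => (m : ℝ≥0∞) * (1 / (n k : ℝ≥0∞))) atTop (𝓝 0) := by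
    simpa using ENNReal.Tendsto.const_mul
      (ENNReal.tendsto_inv_nat_nhds_zero.comp hn) (.inr (ENNReal.natCast_ne_top m))
  calc limsup (fun k => (ν k : Measure X) (⋃ j ∈ Finset.range (n k), H j)) atTop
      ≤ limsup (fun k => m * (1 / (n k : ℝ≥0∞)) + (ν k : Measure X) T) atTop :=
        limsup_le_limsup (.of_forall hbound)
    _ = limsup (fun k => (ν k : Measure X) T) atTop :=
        ENNReal.limsup_add_of_left_tendsto_zero hsmall _
    _ ≤ (μ : Measure X) T := limsup_measure_closed_le_of_tendsto hconv isClosed_closure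

theorem stmt_1_general {X : Type*} [MetricSpace X]
    [MeasurableSpace X] [BorelSpace X]
    (n : ℕ → ℕ) (hn : StrictMono n)
    (ν : ℕ → ProbabilityMeasure X) (μ : ProbabilityMeasure X)
    (hconv : Tendsto ν atTop (𝓝 μ))
    (H : ℕ → Set X) (hH : ∀ j, H j = ∅ ∨ ∃ x, H j = {x})
    (θ : ℝ≥0∞)
    (hmass : ∀ k, θ < (ν k : Measure X) (⋃ j ∈ Finset.range (n k), H j))
    (hsingle : ∀ k (x : X), (ν k : Measure X) {x} ≤ 1 / (n k : ℝ≥0∞)) :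
    θ ≤ limsup (fun k => (ν k : Measure X) (⋃ j ∈ Finset.range (n k), H j)) atTop ∧
    limsup (fun k => (ν k : Measure X) (⋃ j ∈ Finset.range (n k), H j)) atTop ≤
      (μ : Measure X) (⋂ m ∈ Set.Ici 1, closure (⋃ j ∈ Set.Ici m, H j)) := by
  refine ⟨le_limsup_of_frequently_le (.of_forall fun k => (hmass k).le), ?_⟩
  set S : ℕ → Set X := fun m => closure (⋃ j ∈ Set.Ici m, H j)
  have hanti : Antitone fun i => S (i + 1) := fun a b hab =>
    closure_mono <| Set.biUnion_mono (Set.Ici_subset_Ici.2 (by omega)) fun _ _ => subset_rfl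
  rw [show (⋂ m ∈ Set.Ici 1, S m) = ⋂ i, S (i + 1) from Set.iInter_ge_eq_iInter_nat_add S 1,
    hanti.measure_iInter (fun _ => isClosed_closure.measurableSet.nullMeasurableSet)
      ⟨0, measure_ne_top _ _⟩]
  exact le_iInf fun i => ProbabilityMeasure.limsup_measure_biUnion_range_le hconv
    hn.tendsto_atTop (fun j => Set.subsingleton_iff_eq_empty_or_singleton.2 (hH j)) hsingle _

/-- Claim 2.3 of the paper: if empirical-type probability measures `ν k` converge weakly
to `μ`, each set `H j` is empty or a singleton, the mass of each singleton under `ν k` is at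
most `1/(n k)`, and `ν k (⋃_{j < n k} H j) > θ`, then
`μ(H_∞) ≥ limsup_k ν k (⋃_{j < n k} H j) ≥ θ`, where `H_∞` is the topological limit set. -/
theorem stmt_1 {X : Type*} [MetricSpace X] [CompactSpace X]
    [MeasurableSpace X] [BorelSpace X]
    (f : X → X) (hf : Continuous f)
    (n : ℕ → ℕ) (hn : StrictMono n)
    (ν : ℕ → ProbabilityMeasure X) (μ : ProbabilityMeasure X)
    (hconv : Tendsto ν atTop (𝓝 μ))
    (H : ℕ → Set X) (hH : ∀ j, H j = ∅ ∨ ∃ x, H j = {x})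
    (θ : ℝ≥0∞) (hθ : 0 < θ)
    (hmass : ∀ k, θ < (ν k : Measure X) (⋃ j ∈ Finset.range (n k), H j))
    (hsingle : ∀ k (x : X), (ν k : Measure X) {x} ≤ 1 / (n k : ℝ≥0∞)) :
    θ ≤ limsup (fun k => (ν k : Measure X) (⋃ j ∈ Finset.range (n k), H j)) atTop ∧
    limsup (fun k => (ν k : Measure X) (⋃ j ∈ Finset.range (n k), H j)) atTop ≤
      (μ : Measure X) (⋂ m ∈ Set.Ici 1, closure (⋃ j ∈ Set.Ici m, H j)) :=
  stmt_1_general n hn ν μ hconv H hH θ hmass hsingle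
end

section
/- Let f : X → X be a measurable map preserving a Borel probability measure μ on a compact metric space X, and let (φ_n) be a sub-additive sequence of continuous functions, i.e. φ_{n+m}(x) ≤ φ_n(x) + φ_m(f^n x) for all n, m and x. Suppose γ_1 < γ_2 and lim_{n→∞} φ_n(x)/n ≤ γ_1 for μ-almost every x. Then for every θ ∈ (0,1) there exists ℓ_0 ∈ ℕ such that for every ℓ ≥ ℓ_0, the set of points x for which the lower density of T_ℓ(Φ, x, γ_2) := { n : (1/(kℓ))·Σ_{i=n−k}^{n−1} φ_ℓ(f^{iℓ} x) ≤ γ_2 for all 1 ≤ k ≤ n } is at least θ, has μ-measure greater than θ. -/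
open MeasureTheory Filter Topology

open scoped Classical in
/-- The lower density of a set of natural numbers. -/
noncomputable def lowerDensity (A : Set ℕ) : ℝ :=
  liminf (fun n => (((Finset.range n).filter fun i => i ∈ A).card : ℝ) / n) atTop

/-!
Truncate `φ n` from below to `ψ n = max (φ n) (n γ₁)`: this is still sub-additive, dominates `φ n`,
has `ψ n / n` uniformly bounded, and `∫ max (ψ n / n - γ₁) 0 → 0` by dominated convergence. By
Fekete's lemma `∫ ψ n / n` tends to its infimum `c`, so `∫ ψ ℓ / ℓ < c + ε` for all large `ℓ`, where
`δ = (1 - θ) (γ₂ - γ₁)` and `ε = (1 - θ) δ`. For such `ℓ`, sub-additivity bounds `ψ (k ℓ) / (k ℓ)`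
by the Birkhoff averages of `g = ψ ℓ / ℓ` under `f^ℓ`; comparing integrals and letting `k → ∞` with
Birkhoff's ergodic theorem gives `∫ max (G - γ₁) 0 ≤ ε` for the Birkhoff limit `G` of `g`. By
Markov's inequality `G < γ₁ + δ` outside a set of measure `< ε / δ = 1 - θ`, and at such points
Pliss's lemma, applied to the orbit values `g (f^[iℓ] x) ≥ γ₁`, shows that the record minima of
`∑_{i<n} (g (f^[iℓ] x) - γ₂)`, which are hyperbolic times, have lower density at least
`(γ₂ - γ₁ - δ) / (γ₂ - γ₁) = θ`.

Birkhoff's theorem for bounded functions is derived from Garsia's maximal ergodic theorem.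
-/

section Limsup

variable {u v : ℕ → ℝ} {C : ℝ}

lemma limsup_add_eq_of_tendsto_zero (hu : ∀ n, |u n| ≤ C) (hv : Tendsto v atTop (𝓝 0)) :
    limsup (u + v) atTop = limsup u atTop := by
  have hu₁ : IsBoundedUnder (· ≤ ·) atTop u := isBoundedUnder_of ⟨C, fun n => (abs_le.1 (hu n)).2⟩
  have hu₂ : IsBoundedUnder (· ≥ ·) atTop u := isBoundedUnder_of ⟨-C, fun n => (abs_le.1 (hu n)).1⟩
  apply le_antisymm
  · calc limsup (u + v) atTop ≤ limsup u atTop + limsup v atTop :=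
          limsup_add_le hu₂ hu₁ hv.isCoboundedUnder_le hv.isBoundedUnder_le
      _ = limsup u atTop := by rw [hv.limsup_eq, add_zero]
  · calc limsup u atTop = limsup u atTop + liminf v atTop := by rw [hv.liminf_eq, add_zero]
      _ ≤ limsup (u + v) atTop :=
          le_limsup_add hu₁ hu₂.isCoboundedUnder_le hv.isBoundedUnder_le hv.isBoundedUnder_ge

lemma tendsto_limsup_of_limsup_le_neg_limsup_neg (hu : ∀ n, |u n| ≤ C)
    (h : limsup u atTop ≤ -limsup (-u) atTop) : Tendsto u atTop (𝓝 (limsup u atTop)) := by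
  refine tendsto_order.2 ⟨fun a ha => ?_, fun b hb =>
    eventually_lt_of_limsup_lt hb (isBoundedUnder_of ⟨C, fun n => (abs_le.1 (hu n)).2⟩)⟩
  have hneg : limsup (-u) atTop < -a := by linarith
  filter_upwards [eventually_lt_of_limsup_lt hneg
    (isBoundedUnder_of ⟨C, fun n => neg_le.2 (abs_le.1 (hu n)).1⟩)] with n hn
  simp only [Pi.neg_apply] at hn
  linarith

lemma abs_limsup_le (hu : ∀ n, |u n| ≤ C) : |limsup u atTop| ≤ C := by
  have hu₁ : IsBoundedUnder (· ≤ ·) atTop u := isBoundedUnder_of ⟨C, fun n => (abs_le.1 (hu n)).2⟩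
  have hu₂ : IsBoundedUnder (· ≥ ·) atTop u := isBoundedUnder_of ⟨-C, fun n => (abs_le.1 (hu n)).1⟩
  exact abs_le.2
    ⟨le_limsup_of_frequently_le (Frequently.of_forall fun n => (abs_le.1 (hu n)).1) hu₁,
    limsup_le_of_le hu₂.isCoboundedUnder_le (Eventually.of_forall fun n => (abs_le.1 (hu n)).2)⟩

end Limsup

lemma norm_max_sub_zero_le {a γ C : ℝ} (h : |a| ≤ C) : ‖max (a - γ) 0‖ ≤ C + |γ| := by
  rw [Real.norm_eq_abs, abs_of_nonneg (le_max_right _ _)]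
  exact max_le (by linarith [(abs_le.1 h).2, neg_abs_le γ])
    (add_nonneg ((abs_nonneg _).trans h) (abs_nonneg γ))

section Density

open scoped Classical in
lemma lowerDensity_eq_liminf_count (A : Set ℕ) :
    lowerDensity A = liminf (fun n => (Nat.count (· ∈ A) n : ℝ) / n) atTop := by
  simp only [lowerDensity, Nat.count_eq_card_filter_range]

lemma count_div_le_one (p : ℕ → Prop) [DecidablePred p] (n : ℕ) : (Nat.count p n : ℝ) / n ≤ 1 :=
  div_le_one_of_le₀ (by exact_mod_cast Nat.count_le p) n.cast_nonneg

open scoped Classical in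
lemma le_lowerDensity {A : Set ℕ} {ρ : ℝ} (h : ∀ᶠ n in atTop, ρ ≤ (Nat.count (· ∈ A) n : ℝ) / n) :
    ρ ≤ lowerDensity A := by
  rw [lowerDensity_eq_liminf_count]
  exact le_liminf_of_le (isBoundedUnder_of ⟨1, count_div_le_one _⟩).isCoboundedUnder_ge h

lemma lowerDensity_mono {A B : Set ℕ} (h : A ⊆ B) : lowerDensity A ≤ lowerDensity B := by
  classical
  rw [lowerDensity_eq_liminf_count, lowerDensity_eq_liminf_count]
  refine liminf_le_liminf (Eventually.of_forall fun n => ?_) (isBoundedUnder_of ⟨0, fun n => ?_⟩)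
    (isBoundedUnder_of ⟨1, count_div_le_one _⟩).isCoboundedUnder_ge
  · exact div_le_div_of_nonneg_right (by exact_mod_cast Nat.count_mono_left fun k _ hk => h hk)
      n.cast_nonneg
  · positivity

end Density

section Pliss

def recordMinima (S : ℕ → ℝ) : Set ℕ := {n | ∀ j < n, S n ≤ S j}

variable {S : ℕ → ℝ} {D : ℝ}

open scoped Classical in
/-- Pliss's counting argument: the running minimum of `S` only drops at record times, and then by
at most `D`. -/
lemma sub_mul_count_recordMinima_le (hD : 0 ≤ D) (hS : ∀ n, S n - D ≤ S (n + 1)) (N : ℕ) :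
    ∀ j ≤ N, S 0 - D * (Nat.count (· ∈ recordMinima S) (N + 1) - 1) ≤ S j := by
  induction N with
  | zero =>
    have h0 : (0 : ℕ) ∈ recordMinima S := fun j hj => absurd hj j.not_lt_zero
    intro j hj
    simp [Nat.count_succ, h0, Nat.le_zero.1 hj]
  | succ N ih =>
    intro j hj
    have hcount := Nat.count_succ (· ∈ recordMinima S) (N + 1)
    rcases hj.lt_or_eq with hj | rfl
    · have := ih j (by omega)
      split_ifs at hcount <;> rw [hcount] <;> push_cast <;> nlinarith
    · by_cases hrec : N + 1 ∈ recordMinima S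
      · rw [if_pos hrec] at hcount
        rw [hcount]
        push_cast
        linarith [ih N le_rfl, hS N]
      · obtain ⟨j, hj, hlt⟩ : ∃ j < N + 1, S j < S (N + 1) := by
          simpa [recordMinima] using hrec
        rw [if_neg hrec, add_zero] at hcount
        rw [hcount]
        linarith [ih j (by omega)]

open scoped Classical in
lemma le_lowerDensity_recordMinima (hD : 0 < D) (hS : ∀ n, S n - D ≤ S (n + 1)) {κ : ℝ}
    (hκ : ∀ᶠ N in atTop, S N ≤ S 0 - κ * N) : κ / D ≤ lowerDensity (recordMinima S) := by
  refine le_lowerDensity ?_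
  filter_upwards [hκ, eventually_gt_atTop 0] with N hN hN0
  have h₁ := sub_mul_count_recordMinima_le hD.le hS N N le_rfl
  have h₂ : (Nat.count (· ∈ recordMinima S) (N + 1) : ℝ) ≤
      Nat.count (· ∈ recordMinima S) N + 1 := by
    rw [Nat.count_succ]
    push_cast
    split_ifs <;> simp
  rw [div_le_div_iff₀ hD (by positivity)]
  nlinarith

end Pliss

section BirkhoffSum

variable {X : Type*} {T : X → X} {g : X → ℝ} {C : ℝ}

lemma abs_birkhoffSum_le (hb : ∀ x, |g x| ≤ C) (n : ℕ) (x : X) :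
    |birkhoffSum T g n x| ≤ n * C :=
  (Finset.abs_sum_le_sum_abs _ _).trans <| by
    simpa using Finset.sum_le_sum fun i (_ : i ∈ Finset.range n) => hb (T^[i] x)

lemma abs_birkhoffAverage_le (hb : ∀ x, |g x| ≤ C) (n : ℕ) (x : X) :
    |birkhoffAverage ℝ T g n x| ≤ C := by
  rcases n.eq_zero_or_pos with rfl | hn
  · simpa using (abs_nonneg _).trans (hb x)
  rw [birkhoffAverage, smul_eq_mul, abs_mul, abs_inv, Nat.abs_cast,
    inv_mul_le_iff₀ (by positivity)]
  exact abs_birkhoffSum_le hb n x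

noncomputable def birkhoffMax (T : X → X) (g : X → ℝ) (N : ℕ) : X → ℝ :=
  (Finset.range (N + 1)).sup' Finset.nonempty_range_add_one fun n => birkhoffSum T g n

lemma birkhoffMax_apply (N : ℕ) (x : X) : birkhoffMax T g N x =
    (Finset.range (N + 1)).sup' Finset.nonempty_range_add_one fun n => birkhoffSum T g n x :=
  Finset.sup'_apply _ _ _

lemma birkhoffSum_le_birkhoffMax {n N : ℕ} (h : n ≤ N) (x : X) :
    birkhoffSum T g n x ≤ birkhoffMax T g N x := by
  rw [birkhoffMax_apply]
  exact Finset.le_sup' (fun n => birkhoffSum T g n x) (Finset.mem_range_succ_iff.2 h)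

lemma birkhoffMax_nonneg (N : ℕ) (x : X) : 0 ≤ birkhoffMax T g N x := by
  simpa using birkhoffSum_le_birkhoffMax (T := T) (g := g) N.zero_le x

lemma exists_birkhoffMax_eq (N : ℕ) (x : X) :
    ∃ n ≤ N, birkhoffMax T g N x = birkhoffSum T g n x := by
  obtain ⟨n, hn, h⟩ := Finset.exists_mem_eq_sup' Finset.nonempty_range_add_one
    fun n => birkhoffSum T g n x
  exact ⟨n, Finset.mem_range_succ_iff.1 hn, (birkhoffMax_apply N x).trans h⟩

lemma birkhoffMax_mono (x : X) : Monotone fun N => birkhoffMax T g N x := fun N N' h => by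
  obtain ⟨n, hn, hn'⟩ := exists_birkhoffMax_eq (T := T) (g := g) N x
  simp only [hn']
  exact birkhoffSum_le_birkhoffMax (hn.trans h) x

lemma birkhoffMax_le_add_birkhoffMax_apply {N : ℕ} {x : X} (h : 0 < birkhoffMax T g N x) :
    birkhoffMax T g N x ≤ g x + birkhoffMax T g N (T x) := by
  obtain ⟨_ | n, hnN, hn⟩ := exists_birkhoffMax_eq (T := T) (g := g) N x
  · simp [hn] at h
  · rw [hn, birkhoffSum_succ']
    exact add_le_add_right (birkhoffSum_le_birkhoffMax (by omega) _) _

lemma birkhoffSum_indicator_of_preimage_eq {E : Set X} (hE : T ⁻¹' E = E) (n : ℕ) (x : X) :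
    birkhoffSum T (E.indicator g) n x = E.indicator (birkhoffSum T g n) x := by
  have horbit : ∀ i, T^[i] x ∈ E ↔ x ∈ E := fun i => by
    rw [← Set.mem_preimage, Set.preimage_iterate_eq, Function.iterate_fixed hE]
  by_cases hx : x ∈ E
  · simp [birkhoffSum, hx, (horbit _).2 hx]
  · simp [birkhoffSum, hx, fun i => mt (horbit i).1 hx]

lemma limsup_birkhoffAverage_apply (hb : ∀ x, |g x| ≤ C) (x : X) :
    limsup (birkhoffAverage ℝ T g · (T x)) atTop = limsup (birkhoffAverage ℝ T g · x) atTop := by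
  have hbdd : Bornology.IsBounded (Set.range g) :=
    isBounded_iff_forall_norm_le.2 ⟨C, by rintro _ ⟨y, rfl⟩; exact hb y⟩
  have := limsup_add_eq_of_tendsto_zero (u := (birkhoffAverage ℝ T g · x))
    (abs_birkhoffAverage_le (T := T) hb · x)
    (tendsto_birkhoffAverage_apply_sub_birkhoffAverage' (𝕜 := ℝ) hbdd T x)
  rw [← this]
  congr 1
  ext n
  simp

end BirkhoffSum

theorem MeasureTheory.MeasurePreserving.integral_comp_of_aestronglyMeasurable {X Y : Type*}
    [MeasurableSpace X] [MeasurableSpace Y] {μ : Measure X} {ν : Measure Y} {T : X → Y}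
    (hT : MeasurePreserving T μ ν) {g : Y → ℝ} (hg : AEStronglyMeasurable g ν) :
    ∫ x, g (T x) ∂μ = ∫ y, g y ∂ν := by
  rw [← hT.map_eq] at hg ⊢
  exact (integral_map hT.measurable.aemeasurable hg).symm

section Ergodic

variable {X : Type*} [MeasurableSpace X] {μ : Measure X} {T : X → X} {g : X → ℝ} {C : ℝ}

lemma measurable_birkhoffSum (hT : Measurable T) (hg : Measurable g) (n : ℕ) :
    Measurable (birkhoffSum T g n) :=
  Finset.measurable_sum _ fun i _ => hg.comp (hT.iterate i)

lemma measurable_birkhoffAverage (hT : Measurable T) (hg : Measurable g) (n : ℕ) :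
    Measurable (birkhoffAverage ℝ T g n) :=
  (measurable_birkhoffSum hT hg n).const_smul ((n : ℝ)⁻¹)

lemma integrable_birkhoffSum (hT : MeasurePreserving T μ μ) (hg : Integrable g μ) (n : ℕ) :
    Integrable (birkhoffSum T g n) μ :=
  integrable_finsetSum _ fun i _ => (hT.iterate i).integrable_comp_of_integrable hg

lemma integral_birkhoffSum (hT : MeasurePreserving T μ μ) (hg : Integrable g μ) (n : ℕ) :
    ∫ x, birkhoffSum T g n x ∂μ = n * ∫ x, g x ∂μ := by
  have hcomp : ∀ i, ∫ x, g (T^[i] x) ∂μ = ∫ x, g x ∂μ := fun i =>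
    (hT.iterate i).integral_comp_of_aestronglyMeasurable hg.aestronglyMeasurable
  simp only [birkhoffSum]
  rw [integral_finsetSum _ fun i _ => by
    simpa [Function.comp_def] using (hT.iterate i).integrable_comp_of_integrable hg]
  simp [hcomp]

lemma integral_birkhoffAverage (hT : MeasurePreserving T μ μ) (hg : Integrable g μ) {n : ℕ}
    (hn : n ≠ 0) : ∫ x, birkhoffAverage ℝ T g n x ∂μ = ∫ x, g x ∂μ := by
  simp only [birkhoffAverage, smul_eq_mul]
  rw [integral_const_mul, integral_birkhoffSum hT hg, ← mul_assoc,
    inv_mul_cancel₀ (Nat.cast_ne_zero.2 hn), one_mul]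

lemma measurable_birkhoffMax (hT : Measurable T) (hg : Measurable g) (N : ℕ) :
    Measurable (birkhoffMax T g N) :=
  Finset.measurable_range_sup' fun n _ => measurable_birkhoffSum hT hg n

lemma integrable_birkhoffMax (hT : MeasurePreserving T μ μ) (hg : Integrable g μ) (N : ℕ) :
    Integrable (birkhoffMax T g N) μ :=
  Finset.sup'_induction (p := fun F : X → ℝ => Integrable F μ) _ _ (fun _ h₁ _ h₂ => h₁.sup h₂)
    fun n _ => integrable_birkhoffSum hT hg n

lemma setIntegral_birkhoffMax_pos_nonneg (hT : MeasurePreserving T μ μ) (hg : Measurable g)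
    (hgi : Integrable g μ) (N : ℕ) : 0 ≤ ∫ x in {x | 0 < birkhoffMax T g N x}, g x ∂μ := by
  set M := birkhoffMax T g N
  have hMi : Integrable M μ := integrable_birkhoffMax hT hgi N
  have hMT : Integrable (fun x => M (T x)) μ := hT.integrable_comp_of_integrable hMi
  have hstep : ∀ x, M x - M (T x) ≤ {x | 0 < M x}.indicator g x := fun x => by
    by_cases hx : 0 < M x
    · rw [Set.indicator_of_mem (show x ∈ {x | 0 < M x} from hx)]
      linarith [birkhoffMax_le_add_birkhoffMax_apply hx]
    · rw [Set.indicator_of_notMem (show x ∉ {x | 0 < M x} from hx)]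
      linarith [birkhoffMax_nonneg (T := T) (g := g) N (T x)]
  calc 0 = ∫ x, (M x - M (T x)) ∂μ := by
        rw [integral_sub hMi hMT, hT.integral_comp_of_aestronglyMeasurable
          hMi.aestronglyMeasurable, sub_self]
    _ ≤ ∫ x, {x | 0 < M x}.indicator g x ∂μ :=
        integral_mono (hMi.sub hMT) (hgi.indicator
          (measurableSet_lt measurable_const (measurable_birkhoffMax hT.measurable hg N))) hstep
    _ = _ := integral_indicator
          (measurableSet_lt measurable_const (measurable_birkhoffMax hT.measurable hg N))

theorem setIntegral_nonneg_of_exists_birkhoffSum_pos (hT : MeasurePreserving T μ μ)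
    (hg : Measurable g) (hgi : Integrable g μ) :
    0 ≤ ∫ x in {x | ∃ n, 0 < birkhoffSum T g n x}, g x ∂μ := by
  have hU : {x | ∃ n, 0 < birkhoffSum T g n x} = ⋃ N, {x | 0 < birkhoffMax T g N x} := by
    ext x
    simp only [Set.mem_ofPred_eq, Set.mem_iUnion]
    constructor
    · rintro ⟨n, hn⟩
      exact ⟨n, hn.trans_le (birkhoffSum_le_birkhoffMax le_rfl x)⟩
    · rintro ⟨N, hN⟩
      obtain ⟨n, -, hn⟩ := exists_birkhoffMax_eq (T := T) (g := g) N x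
      exact ⟨n, hn ▸ hN⟩
  rw [hU]
  exact ge_of_tendsto' (tendsto_setIntegral_of_monotone
    (fun N => measurableSet_lt measurable_const (measurable_birkhoffMax hT.measurable hg N))
    (fun N N' h x hx => lt_of_lt_of_le hx (birkhoffMax_mono x h)) hgi.integrableOn)
    (setIntegral_birkhoffMax_pos_nonneg hT hg hgi)

lemma setIntegral_nonneg_of_preimage_eq (hT : MeasurePreserving T μ μ) (hg : Measurable g)
    (hgi : Integrable g μ) {E : Set X} (hEm : MeasurableSet E) (hE : T ⁻¹' E = E)
    (hpos : ∀ x ∈ E, ∃ n, 0 < birkhoffSum T g n x) : 0 ≤ ∫ x in E, g x ∂μ := by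
  have hset : {x | ∃ n, 0 < birkhoffSum T (E.indicator g) n x} = E := by
    ext x
    simp only [Set.mem_ofPred_eq, birkhoffSum_indicator_of_preimage_eq hE]
    by_cases hx : x ∈ E
    · simpa [hx] using hpos x hx
    · simp [hx]
  have := setIntegral_nonneg_of_exists_birkhoffSum_pos hT (hg.indicator hEm) (hgi.indicator hEm)
  rwa [hset, setIntegral_indicator hEm, Set.inter_self] at this

lemma mul_measureReal_le_setIntegral [IsFiniteMeasure μ] (hT : MeasurePreserving T μ μ)
    (hg : Measurable g) (hb : ∀ x, |g x| ≤ C) {E : Set X} (hEm : MeasurableSet E)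
    (hE : T ⁻¹' E = E) {r : ℝ} (hr : ∀ x ∈ E, r < limsup (birkhoffAverage ℝ T g · x) atTop) :
    r * μ.real E ≤ ∫ x in E, g x ∂μ := by
  have hgi : Integrable g μ := Integrable.of_bound hg.aestronglyMeasurable C (ae_of_all _ hb)
  have key := setIntegral_nonneg_of_preimage_eq (g := fun x => g x - r) hT (hg.sub measurable_const)
    (hgi.sub (integrable_const r)) hEm hE fun x hx => ?_
  · rw [integral_sub hgi.integrableOn (integrable_const r).integrableOn, setIntegral_const,
      smul_eq_mul] at key
    linarith
  have hbdd : IsBoundedUnder (· ≥ ·) atTop (birkhoffAverage ℝ T g · x) :=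
    isBoundedUnder_of ⟨-C, fun n => (abs_le.1 (abs_birkhoffAverage_le hb n x)).1⟩
  obtain ⟨n, hrn, hn⟩ :=
    ((frequently_lt_of_lt_limsup hbdd.isCoboundedUnder_le (hr x hx)).and_eventually
      (eventually_gt_atTop 0)).exists
  refine ⟨n, ?_⟩
  rw [birkhoffAverage, smul_eq_mul, lt_inv_mul_iff₀ (by positivity)] at hrn
  simp only [birkhoffSum, Finset.sum_sub_distrib, Finset.sum_const, Finset.card_range,
    nsmul_eq_mul] at hrn ⊢
  linarith

theorem ae_tendsto_birkhoffAverage [IsFiniteMeasure μ] (hT : MeasurePreserving T μ μ)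
    (hg : Measurable g) (hb : ∀ x, |g x| ≤ C) :
    ∀ᵐ x ∂μ, Tendsto (birkhoffAverage ℝ T g · x) atTop
      (𝓝 (limsup (birkhoffAverage ℝ T g · x) atTop)) := by
  set L : (X → ℝ) → X → ℝ := fun h x => limsup (birkhoffAverage ℝ T h · x) atTop
  have hb' : ∀ x, |(-g) x| ≤ C := by simpa using hb
  -- On the invariant set `E` the maximal inequality gives `r μ E ≤ ∫_E g ≤ q μ E`.
  have hnull : ∀ q r : ℚ, q < r → μ {x | r < L g x ∧ -q < L (-g) x} = 0 := by
    intro q r hqr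
    set E := {x | r < L g x ∧ -q < L (-g) x}
    have hEm : MeasurableSet E :=
      (measurableSet_lt measurable_const (Measurable.limsup
        (measurable_birkhoffAverage hT.measurable hg))).inter
      (measurableSet_lt measurable_const (Measurable.limsup
        (measurable_birkhoffAverage hT.measurable hg.neg)))
    have hE : T ⁻¹' E = E := by
      ext x
      simp only [E, L, Set.mem_preimage, Set.mem_ofPred_eq, limsup_birkhoffAverage_apply hb,
        limsup_birkhoffAverage_apply hb']
    have h₁ := mul_measureReal_le_setIntegral hT hg hb hEm hE fun x hx => hx.1
    have h₂ := mul_measureReal_le_setIntegral hT hg.neg hb' hEm hE fun x hx => hx.2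
    rw [Pi.neg_def, integral_neg] at h₂
    have hqr' : (q : ℝ) < r := by exact_mod_cast hqr
    have : μ.real E = 0 := by nlinarith [measureReal_nonneg (μ := μ) (s := E)]
    exact (measureReal_eq_zero_iff).1 this
  -- `-L (-g) x` is the liminf of the averages, so off the null sets above they converge.
  have hae : ∀ᵐ x ∂μ, ∀ q r : ℚ, q < r → ¬ (r < L g x ∧ -q < L (-g) x) := by
    simp only [ae_all_iff]
    exact fun q r hqr => measure_eq_zero_iff_ae_notMem.1 (hnull q r hqr)
  filter_upwards [hae] with x hx
  refine tendsto_limsup_of_limsup_le_neg_limsup_neg (abs_birkhoffAverage_le hb · x) ?_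
  by_contra! h
  obtain ⟨q, hq₁, hq₂⟩ := exists_rat_btwn h
  obtain ⟨r, hr₁, hr₂⟩ := exists_rat_btwn hq₂
  have hneg : L (-g) x = limsup (-(birkhoffAverage ℝ T g · x)) atTop := by
    simp only [L, birkhoffAverage_neg]
    rfl
  exact hx q r (by exact_mod_cast hr₁) ⟨hr₂, by linarith⟩

lemma integral_max_sub_le_of_le [IsFiniteMeasure μ] {a p : X → ℝ} (ha : Integrable a μ)
    (hp : Integrable p μ) (hpa : ∀ x, p x ≤ a x) (γ : ℝ) :
    ∫ x, max (a x - γ) 0 ∂μ ≤ ∫ x, a x ∂μ - ∫ x, p x ∂μ + ∫ x, max (p x - γ) 0 ∂μ := by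
  have hp' : Integrable (fun x => max (p x - γ) 0) μ := (hp.sub (integrable_const γ)).pos_part
  rw [← integral_sub ha hp, ← integral_add (f := fun x => a x - p x) (ha.sub hp) hp']
  exact integral_mono (ha.sub (integrable_const γ)).pos_part ((ha.sub hp).add hp') fun x =>
    max_le (by linarith [le_max_left (p x - γ) 0]) (by linarith [le_max_right (p x - γ) 0, hpa x])

end Ergodic

section Subadditive

variable {X : Type*} {f : X → X} {φ : ℕ → X → ℝ}

def IsSubadditiveCocycle (f : X → X) (φ : ℕ → X → ℝ) : Prop :=
  ∀ n m x, φ (n + m) x ≤ φ n x + φ m (f^[n] x)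

namespace IsSubadditiveCocycle

lemma max_mul_const (hφ : IsSubadditiveCocycle f φ) (c : ℝ) :
    IsSubadditiveCocycle f fun n x => max (φ n x) (n * c) := fun n m x => by
  refine max_le ((hφ n m x).trans (add_le_add (le_max_left _ _) (le_max_left _ _))) ?_
  rw [Nat.cast_add, add_mul]
  exact add_le_add (le_max_right _ _) (le_max_right _ _)

lemma le_mul_of_forall_le (hφ : IsSubadditiveCocycle f φ) {M : ℝ} (hM : ∀ x, φ 1 x ≤ M)
    (n : ℕ) (x : X) : φ (n + 1) x ≤ (n + 1) * M := by
  induction n generalizing x with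
  | zero => simpa using hM x
  | succ n ih =>
    calc φ (n + 1 + 1) x ≤ φ (n + 1) x + φ 1 (f^[n + 1] x) := hφ _ _ _
      _ ≤ (n + 1) * M + M := add_le_add (ih x) (hM _)
      _ = (↑(n + 1) + 1) * M := by push_cast; ring

lemma le_birkhoffSum_iterate (hφ : IsSubadditiveCocycle f φ) (ℓ k : ℕ) (x : X) :
    φ ((k + 1) * ℓ) x ≤ birkhoffSum f^[ℓ] (φ ℓ) (k + 1) x := by
  induction k with
  | zero => simp [birkhoffSum_one]
  | succ k ih =>
    rw [birkhoffSum_succ, ← Function.iterate_mul, mul_comm ℓ, add_mul _ 1, one_mul]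
    exact (hφ _ _ _).trans (add_le_add_left ih _)

lemma div_le_abs_of_forall_le (hφ : IsSubadditiveCocycle f φ) {M : ℝ} (hM : ∀ x, φ 1 x ≤ M)
    (n : ℕ) (x : X) : φ n x / n ≤ |M| := by
  rcases n with _ | n
  · simp
  have hn : (0 : ℝ) < ↑(n + 1) := by positivity
  rw [div_le_iff₀ hn]
  push_cast at hn ⊢
  nlinarith [hφ.le_mul_of_forall_le hM n x, le_abs_self M]

lemma abs_max_mul_const_div_le (hφ : IsSubadditiveCocycle f φ) {M : ℝ} (hM : ∀ x, φ 1 x ≤ M)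
    (c : ℝ) (n : ℕ) (x : X) : |max (φ n x) (n * c) / n| ≤ |M| + |c| := by
  rcases n with _ | n
  · simp only [Nat.cast_zero, div_zero, abs_zero]
    positivity
  have hn : (0 : ℝ) < ↑(n + 1) := by positivity
  rw [abs_div, abs_of_pos hn, div_le_iff₀ hn, abs_le]
  have hφn := hφ.le_mul_of_forall_le hM n x
  push_cast at hn ⊢
  constructor
  · nlinarith [le_max_right (φ (n + 1) x) ((n + 1) * c), neg_abs_le c, abs_nonneg M]
  · refine max_le ?_ ?_ <;> nlinarith [le_abs_self M, le_abs_self c, abs_nonneg M, abs_nonneg c]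

lemma div_le_birkhoffAverage_iterate (hφ : IsSubadditiveCocycle f φ) (ℓ k : ℕ) (x : X) :
    φ ((k + 1) * ℓ) x / ↑((k + 1) * ℓ) ≤ birkhoffAverage ℝ f^[ℓ] (φ ℓ · / ℓ) (k + 1) x := by
  have hsum : birkhoffAverage ℝ f^[ℓ] (φ ℓ · / ℓ) (k + 1) x =
      birkhoffSum f^[ℓ] (φ ℓ) (k + 1) x / ↑((k + 1) * ℓ) := by
    simp only [birkhoffAverage, birkhoffSum, ← Finset.sum_div, smul_eq_mul]
    push_cast
    field_simp
  rw [hsum]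
  gcongr
  exact hφ.le_birkhoffSum_iterate ℓ k x

end IsSubadditiveCocycle

/-- The set `T_ℓ(Φ, x, γ)` of `(φ ℓ, γ)`-hyperbolic times of `x` under `f^[ℓ]`. -/
def hyperbolicTimes (f : X → X) (φ : ℕ → X → ℝ) (ℓ : ℕ) (γ : ℝ) (x : X) : Set ℕ :=
  {n | ∀ k, 1 ≤ k → k ≤ n → (∑ i ∈ Finset.Ico (n - k) n, φ ℓ (f^[i * ℓ] x)) / (k * ℓ : ℝ) ≤ γ}

lemma le_lowerDensity_hyperbolicTimes {ℓ : ℕ} (hℓ : ℓ ≠ 0) {g : X → ℝ} {m γ γ' : ℝ}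
    (hφg : ∀ y, φ ℓ y ≤ ℓ * g y) (hgm : ∀ y, m ≤ g y) (hmγ : m < γ) {x : X}
    (hx : ∀ᶠ N in atTop, birkhoffSum f^[ℓ] g N x ≤ γ' * N) :
    (γ - γ') / (γ - m) ≤ lowerDensity (hyperbolicTimes f φ ℓ γ x) := by
  set S : ℕ → ℝ := fun n => birkhoffSum f^[ℓ] g n x - γ * n
  have hrec : recordMinima S ⊆ hyperbolicTimes f φ ℓ γ x := by
    intro n hn k hk hkn
    have hSk := hn (n - k) (by omega)
    have hsum : ∑ i ∈ Finset.Ico (n - k) n, g ((f^[ℓ])^[i] x) ≤ γ * k := by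
      rw [Finset.sum_Ico_eq_sub _ (Nat.sub_le n k)]
      simp only [S, birkhoffSum, Nat.cast_sub hkn] at hSk
      linarith
    rw [div_le_iff₀ (by positivity)]
    calc ∑ i ∈ Finset.Ico (n - k) n, φ ℓ (f^[i * ℓ] x)
        ≤ ∑ i ∈ Finset.Ico (n - k) n, ℓ * g ((f^[ℓ])^[i] x) :=
          Finset.sum_le_sum fun i _ => by rw [← Function.iterate_mul, mul_comm ℓ]; exact hφg _
      _ = ℓ * ∑ i ∈ Finset.Ico (n - k) n, g ((f^[ℓ])^[i] x) := (Finset.mul_sum ..).symm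
      _ ≤ ℓ * (γ * k) := by gcongr
      _ = γ * (k * ℓ) := by ring
  refine (le_lowerDensity_recordMinima (sub_pos.2 hmγ) (fun n => ?_) ?_).trans
    (lowerDensity_mono hrec)
  · simp only [S, birkhoffSum_succ]
    push_cast
    linarith [hgm ((f^[ℓ])^[n] x)]
  · filter_upwards [hx] with N hN
    simp only [S, birkhoffSum_zero]
    push_cast
    linarith

variable [MeasurableSpace X] {μ : Measure X} {ψ : ℕ → X → ℝ}

namespace IsSubadditiveCocycle

lemma subadditive_integral (hφ : IsSubadditiveCocycle f φ) (hf : MeasurePreserving f μ μ)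
    (hint : ∀ n, Integrable (φ n) μ) : Subadditive fun n => ∫ x, φ n x ∂μ := fun n m => by
  have hcomp : Integrable (fun x => φ m (f^[n] x)) μ :=
    (hf.iterate n).integrable_comp_of_integrable (hint m)
  calc ∫ x, φ (n + m) x ∂μ ≤ ∫ x, (φ n x + φ m (f^[n] x)) ∂μ :=
        integral_mono (hint _) ((hint n).add hcomp) fun x => hφ n m x
    _ = _ := by
        rw [integral_add (hint n) hcomp,
          (hf.iterate n).integral_comp_of_aestronglyMeasurable (hint m).aestronglyMeasurable]

lemma tendsto_integral_max_mul_const_div_sub [IsFiniteMeasure μ] (hφ : IsSubadditiveCocycle f φ)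
    (hφm : ∀ n, Measurable (φ n)) {M : ℝ} (hM : ∀ x, φ 1 x ≤ M) {c : ℝ}
    (hlim : ∀ᵐ x ∂μ, limsup (fun n => φ n x / n) atTop ≤ c) :
    Tendsto (fun n => ∫ x, max (max (φ n x) (n * c) / n - c) 0 ∂μ) atTop (𝓝 0) := by
  suffices h : ∀ᵐ x ∂μ, Tendsto (fun n => max (max (φ n x) (n * c) / n - c) 0) atTop (𝓝 0) by
    simpa using tendsto_integral_of_dominated_convergence (fun _ => |M| + |c| + |c|)
      (fun n => ((((hφm n).max measurable_const).div_const _).sub_const c).max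
        measurable_const |>.aestronglyMeasurable)
      (integrable_const _)
      (fun n => ae_of_all _ fun x => norm_max_sub_zero_le (hφ.abs_max_mul_const_div_le hM c n x)) h
  filter_upwards [hlim] with x hx
  have hbdd : IsBoundedUnder (· ≤ ·) atTop (fun n => φ n x / n) :=
    isBoundedUnder_of ⟨|M|, (hφ.div_le_abs_of_forall_le hM · x)⟩
  refine tendsto_order.2
    ⟨fun a ha => Eventually.of_forall fun n => ha.trans_le (le_max_right _ _), fun b hb => ?_⟩
  filter_upwards [eventually_lt_of_limsup_lt (show _ < c + b by linarith) hbdd,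
    eventually_gt_atTop 0] with n hn hn0
  have hn0' : (0 : ℝ) < n := by exact_mod_cast hn0
  refine max_lt ?_ hb
  rw [div_lt_iff₀ hn0'] at hn
  rw [sub_lt_iff_lt_add', div_lt_iff₀ hn0']
  exact max_lt hn (by nlinarith)

theorem integral_max_limsup_birkhoffAverage_sub_le [IsFiniteMeasure μ]
    (hψ : IsSubadditiveCocycle f ψ) (hf : MeasurePreserving f μ μ) (hψm : ∀ n, Measurable (ψ n))
    {C : ℝ} (hb : ∀ n x, |ψ n x / n| ≤ C) {γ : ℝ}
    (hW : Tendsto (fun n => ∫ x, max (ψ n x / n - γ) 0 ∂μ) atTop (𝓝 0))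
    {c : ℝ} (hc : ∀ n ≠ 0, c ≤ (∫ x, ψ n x ∂μ) / n) {ℓ : ℕ} (hℓ : ℓ ≠ 0) :
    ∫ x, max (limsup (birkhoffAverage ℝ f^[ℓ] (ψ ℓ · / ℓ) · x) atTop - γ) 0 ∂μ ≤
      (∫ x, ψ ℓ x ∂μ) / ℓ - c := by
  set g : X → ℝ := (ψ ℓ · / ℓ)
  have hT := hf.iterate ℓ
  have hg : Measurable g := (hψm ℓ).div_const _
  have hψi : ∀ n, Integrable (ψ n · / n) μ := fun n =>
    Integrable.of_bound ((hψm n).div_const _).aestronglyMeasurable C (ae_of_all _ (hb n))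
  have hstep : ∀ k, ∫ x, max (birkhoffAverage ℝ f^[ℓ] g (k + 1) x - γ) 0 ∂μ ≤
      (∫ x, ψ ℓ x ∂μ) / ℓ - c + ∫ x, max (ψ ((k + 1) * ℓ) x / ↑((k + 1) * ℓ) - γ) 0 ∂μ :=
    fun k => by
      refine (integral_max_sub_le_of_le (Integrable.of_bound
        (measurable_birkhoffAverage hT.measurable hg _).aestronglyMeasurable C
        (ae_of_all _ (abs_birkhoffAverage_le (hb ℓ) _))) (hψi _)
        (hψ.div_le_birkhoffAverage_iterate ℓ k) γ).trans ?_
      rw [integral_birkhoffAverage hT (hψi ℓ) k.succ_ne_zero, integral_div, integral_div]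
      linarith [hc _ (Nat.mul_ne_zero k.succ_ne_zero hℓ)]
  have hlimL : Tendsto (fun k => ∫ x, max (birkhoffAverage ℝ f^[ℓ] g (k + 1) x - γ) 0 ∂μ) atTop
      (𝓝 (∫ x, max (limsup (birkhoffAverage ℝ f^[ℓ] g · x) atTop - γ) 0 ∂μ)) := by
    refine tendsto_integral_of_dominated_convergence (fun _ => C + |γ|)
      (fun k => ((measurable_birkhoffAverage hT.measurable hg _).sub_const γ).max
        measurable_const |>.aestronglyMeasurable)
      (integrable_const _) (fun k => ae_of_all _ fun x => ?_) ?_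
    · exact norm_max_sub_zero_le (abs_birkhoffAverage_le (hb ℓ) _ x)
    · filter_upwards [ae_tendsto_birkhoffAverage hT hg (hb ℓ)] with x hx
      exact (((tendsto_add_atTop_iff_nat 1).2 hx).sub_const γ).max tendsto_const_nhds
  have hlimR : Tendsto (fun k => (∫ x, ψ ℓ x ∂μ) / ℓ - c +
      ∫ x, max (ψ ((k + 1) * ℓ) x / ↑((k + 1) * ℓ) - γ) 0 ∂μ) atTop
      (𝓝 ((∫ x, ψ ℓ x ∂μ) / ℓ - c)) := by
    have hmul : Tendsto (fun k => (k + 1) * ℓ) atTop atTop :=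
      tendsto_atTop_mono (fun k => Nat.le_mul_of_pos_right _ (Nat.pos_of_ne_zero hℓ))
        (tendsto_add_atTop_nat 1)
    simpa using tendsto_const_nhds.add (hW.comp hmul)
  exact le_of_tendsto_of_tendsto' hlimL hlimR hstep

end IsSubadditiveCocycle

lemma lt_measureReal_setOf_le_lowerDensity [IsProbabilityMeasure μ] (hf : MeasurePreserving f μ μ)
    {ℓ : ℕ} (hℓ : ℓ ≠ 0) {g : X → ℝ} (hg : Measurable g) {C : ℝ} (hb : ∀ x, |g x| ≤ C)
    {γ₁ γ₂ θ : ℝ} (hφg : ∀ y, φ ℓ y ≤ ℓ * g y) (hgγ : ∀ y, γ₁ ≤ g y) (hγ : γ₁ < γ₂) (hθ : θ < 1)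
    (hint : ∫ x, max (limsup (birkhoffAverage ℝ f^[ℓ] g · x) atTop - γ₁) 0 ∂μ <
      (1 - θ) ^ 2 * (γ₂ - γ₁)) :
    θ < μ.real {x | θ ≤ lowerDensity (hyperbolicTimes f φ ℓ γ₂ x)} := by
  have hT := hf.iterate ℓ
  set G : X → ℝ := fun x => limsup (birkhoffAverage ℝ f^[ℓ] g · x) atTop
  set δ := (1 - θ) * (γ₂ - γ₁)
  have hδ : 0 < δ := mul_pos (by linarith) (by linarith)
  have hGm : Measurable fun x => max (G x - γ₁) 0 :=
    ((Measurable.limsup (measurable_birkhoffAverage hT.measurable hg)).sub_const _).max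
      measurable_const
  set B := {x | δ ≤ max (G x - γ₁) 0}
  have hB : μ.real B < 1 - θ := by
    have hmarkov := mul_meas_ge_le_integral_of_nonneg
      (ae_of_all μ fun x => le_max_right (G x - γ₁) 0) (Integrable.of_bound
        hGm.aestronglyMeasurable (C + |γ₁|) (ae_of_all _ fun x =>
          norm_max_sub_zero_le (abs_limsup_le (abs_birkhoffAverage_le hb · x)))) δ
    nlinarith
  have hgood : Bᶜ ≤ᵐ[μ] {x | θ ≤ lowerDensity (hyperbolicTimes f φ ℓ γ₂ x)} := by
    filter_upwards [ae_tendsto_birkhoffAverage hT hg hb] with x hx hxB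
    have hGx : G x < γ₁ + δ := by
      have : max (G x - γ₁) 0 < δ := not_le.1 hxB
      linarith [le_max_left (G x - γ₁) 0]
    have hev : ∀ᶠ N in atTop, birkhoffSum f^[ℓ] g N x ≤ (γ₁ + δ) * N := by
      filter_upwards [hx.eventually_lt_const hGx] with N hN
      rcases N.eq_zero_or_pos with rfl | hN0
      · simp
      rw [birkhoffAverage, smul_eq_mul, inv_mul_lt_iff₀ (by positivity)] at hN
      linarith
    have hθ' : θ = (γ₂ - (γ₁ + δ)) / (γ₂ - γ₁) := by
      rw [eq_div_iff (by linarith)]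
      ring
    show θ ≤ _
    rw [hθ']
    exact le_lowerDensity_hyperbolicTimes hℓ hφg hgγ hγ hev
  calc θ < 1 - μ.real B := by linarith
    _ = μ.real Bᶜ := (probReal_compl_eq_one_sub (measurableSet_le measurable_const hGm)).symm
    _ ≤ _ := ENNReal.toReal_mono (measure_ne_top _ _) (measure_mono_ae hgood)

theorem IsSubadditiveCocycle.exists_lt_measureReal_lowerDensity_hyperbolicTimes
    [IsProbabilityMeasure μ] (hφ : IsSubadditiveCocycle f φ) (hf : MeasurePreserving f μ μ)
    (hφm : ∀ n, Measurable (φ n)) (hφb : ∀ n, ∃ C, ∀ x, |φ n x| ≤ C) {γ₁ γ₂ : ℝ} (hγ : γ₁ < γ₂)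
    (hlim : ∀ᵐ x ∂μ, limsup (fun n => φ n x / n) atTop ≤ γ₁) {θ : ℝ} (hθ : θ < 1) :
    ∃ ℓ₀ : ℕ, ∀ ℓ ≥ ℓ₀, θ < μ.real {x | θ ≤ lowerDensity (hyperbolicTimes f φ ℓ γ₂ x)} := by
  obtain ⟨M, hM⟩ : ∃ M, ∀ x, φ 1 x ≤ M := (hφb 1).imp fun C hC x => (le_abs_self _).trans (hC x)
  set ψ : ℕ → X → ℝ := fun n x => max (φ n x) (n * γ₁)
  have hψm : ∀ n, Measurable (ψ n) := fun n => (hφm n).max measurable_const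
  have hψb : ∀ n x, |ψ n x / n| ≤ |M| + |γ₁| := hφ.abs_max_mul_const_div_le hM γ₁
  have hψi : ∀ n, Integrable (ψ n) μ := fun n => by
    obtain ⟨C, hC⟩ := hφb n
    exact Integrable.of_bound (hψm n).aestronglyMeasurable (max C |n * γ₁|)
      (ae_of_all _ fun x => abs_max_le_max_abs_abs.trans (max_le_max (hC x) le_rfl))
  have hu := (hφ.max_mul_const γ₁).subadditive_integral hf hψi
  have hbdd : BddBelow (Set.range fun n => (∫ x, ψ n x ∂μ) / n) := by
    refine ⟨-(|M| + |γ₁|), Set.forall_mem_range.2 fun n => ?_⟩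
    rw [← integral_div]
    calc -(|M| + |γ₁|) = ∫ _, -(|M| + |γ₁|) ∂μ := by simp
      _ ≤ _ := integral_mono (integrable_const _) ((hψi n).div_const _)
          fun x => (abs_le.1 (hψb n x)).1
  have hε : 0 < (1 - θ) ^ 2 * (γ₂ - γ₁) := by nlinarith [sq_pos_of_pos (sub_pos.2 hθ)]
  obtain ⟨ℓ₀, hℓ₀⟩ := eventually_atTop.1 ((hu.tendsto_lim hbdd).eventually
    (gt_mem_nhds (lt_add_of_pos_right hu.lim hε)))
  refine ⟨ℓ₀ + 1, fun ℓ hℓ => ?_⟩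
  have hℓ0 : ℓ ≠ 0 := by omega
  have hℓpos : (0 : ℝ) < ℓ := by positivity
  refine lt_measureReal_setOf_le_lowerDensity hf hℓ0 ((hψm ℓ).div_const _) (hψb ℓ)
    (fun y => ?_) (fun y => ?_) hγ hθ ?_
  · rw [mul_div_cancel₀ _ hℓpos.ne']
    exact le_max_left _ _
  · rw [le_div_iff₀ hℓpos, mul_comm]
    exact le_max_right _ _
  · exact ((hφ.max_mul_const γ₁).integral_max_limsup_birkhoffAverage_sub_le hf hψm hψb
      (hφ.tendsto_integral_max_mul_const_div_sub hφm hM hlim)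
      (fun n hn => hu.lim_le_div hbdd hn) hℓ0).trans_lt (by linarith [hℓ₀ ℓ (by omega)])

end Subadditive

theorem stmt_2_general {X : Type*} [MetricSpace X] [CompactSpace X]
    [MeasurableSpace X] [BorelSpace X]
    (f : X → X)
    (μ : Measure X) [IsProbabilityMeasure μ] (hinv : MeasurePreserving f μ μ)
    (φ : ℕ → X → ℝ) (hcont : ∀ n, Continuous (φ n))
    (hsub : ∀ n m x, φ (n + m) x ≤ φ n x + φ m (f^[n] x))
    (γ₁ γ₂ : ℝ) (hγ : γ₁ < γ₂)
    (hlim : ∀ᵐ x ∂μ, limsup (fun n => φ n x / n) atTop ≤ γ₁)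
    (θ : ℝ) (hθ : θ ∈ Set.Ioo (0:ℝ) 1) :
    ∃ ℓ₀ : ℕ, ∀ ℓ ≥ ℓ₀,
      θ < (μ {x | θ ≤ lowerDensity
        {n | ∀ k, 1 ≤ k → k ≤ n →
          (∑ i ∈ Finset.Ico (n - k) n, φ ℓ (f^[i * ℓ] x)) / (k * ℓ : ℝ) ≤ γ₂}}).toReal := by
  refine IsSubadditiveCocycle.exists_lt_measureReal_lowerDensity_hyperbolicTimes hsub hinv
    (fun n => (hcont n).measurable) (fun n => ?_) hγ hlim hθ.2
  obtain ⟨C, hC⟩ := isCompact_univ.exists_bound_of_continuousOn (hcont n).continuousOn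
  exact ⟨C, fun x => hC x (Set.mem_univ x)⟩

/-- Lemma 3.5 of the paper: for a sub-additive sequence of continuous functions with
a.e. asymptotic rate at most `γ₁ < γ₂`, for every `θ ∈ (0,1)` there is `ℓ₀` such that for
every `ℓ ≥ ℓ₀` the set of points whose set of `(φ_ℓ, γ₂)`-hyperbolic times for `f^ℓ` has
lower density at least `θ` has `μ`-measure greater than `θ`. -/
theorem stmt_2 {X : Type*} [MetricSpace X] [CompactSpace X]
    [MeasurableSpace X] [BorelSpace X]
    (f : X → X) (hf : Measurable f)
    (μ : Measure X) [IsProbabilityMeasure μ] (hinv : MeasurePreserving f μ μ)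
    (φ : ℕ → X → ℝ) (hcont : ∀ n, Continuous (φ n))
    (hsub : ∀ n m x, φ (n + m) x ≤ φ n x + φ m (f^[n] x))
    (γ₁ γ₂ : ℝ) (hγ : γ₁ < γ₂)
    (hlim : ∀ᵐ x ∂μ, limsup (fun n => φ n x / n) atTop ≤ γ₁)
    (θ : ℝ) (hθ : θ ∈ Set.Ioo (0:ℝ) 1) :
    ∃ ℓ₀ : ℕ, ∀ ℓ ≥ ℓ₀,
      θ < (μ {x | θ ≤ lowerDensity
        {n | ∀ k, 1 ≤ k → k ≤ n →
          (∑ i ∈ Finset.Ico (n - k) n, φ ℓ (f^[i * ℓ] x)) / (k * ℓ : ℝ) ≤ γ₂}}).toReal :=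
  stmt_2_general f μ hinv φ hcont hsub γ₁ γ₂ hγ hlim θ hθ
end

section
/- Let f be a C^1 diffeomorphism of a compact Riemannian manifold with continuous Df-invariant sub-bundles E and F, and μ an f-ergodic measure with χ_E^−(μ) > χ_F^+(μ). Then for any γ_1, γ_2 with χ_E^−(μ) > γ_1 > γ_2 > χ_F^+(μ), the measure of Δ(e^{(γ_1−γ_2)ℓ}, f^ℓ, E, F) tends to 1 as ℓ → ∞, where Δ(λ, g, E, F) = { x : Π_{j=0}^{k−1} m(Dg|_{E(g^j x)}) / ‖Dg|_{F(g^j x)}‖ ≥ λ^k for all k ≥ 1 }. -/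
open MeasureTheory Filter Topology

/-!
Put `g ℓ = log (mE ℓ / nF ℓ)`. It is a superadditive cocycle, so by compactness `g ℓ ≥ c ℓ`
everywhere, and `g ℓ / ℓ → χE - χF` almost everywhere. Fix `γ₁ - γ₂ < a < χE - χF` and let `G_N`
be the set where `g n ≥ a n` for all `n ≥ N`, so that `μ (G_N)ᶜ → 0`. For `ℓ ≥ N`, if the
`f^ℓ`-orbit of `x` spends at most a fraction `θ` of each initial segment in `(G_N)ᶜ`, then the
`k`-th Birkhoff sum of `g ℓ` along it is at least `(a - θ (a - c)) ℓ k`, which is `(γ₁ - γ₂) ℓ k`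
for a suitable `θ > 0`. By the maximal ergodic theorem for `f^ℓ`, the points where this frequency
bound fails at some time form a set of measure at most `μ (G_N)ᶜ / θ`.
-/

section

variable {X : Type*} {T : X → X}

theorem mul_le_of_superadditive_cocycle {u : ℕ → X → ℝ}
    (hu : ∀ n m x, u n x + u m (T^[n] x) ≤ u (n + m) x) {c : ℝ} (hc : ∀ x, c ≤ u 1 x) :
    ∀ n, 1 ≤ n → ∀ x, c * n ≤ u n x := by
  refine Nat.le_induction (by simpa using hc) fun n _ ih x => ?_
  calc c * ↑(n + 1) = c * n + c := by push_cast; ring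
    _ ≤ u n x + u 1 (T^[n] x) := add_le_add (ih x) (hc _)
    _ ≤ u (n + 1) x := hu n 1 x

theorem log_div_superadditive {mE nF : ℕ → X → ℝ}
    (hmEpos : ∀ n x, 0 < mE n x) (hnFpos : ∀ n x, 0 < nF n x)
    (hmEsup : ∀ n m x, mE n x * mE m (T^[n] x) ≤ mE (n + m) x)
    (hnFsub : ∀ n m x, nF (n + m) x ≤ nF n x * nF m (T^[n] x)) (n m : ℕ) (x : X) :
    Real.log (mE n x / nF n x) + Real.log (mE m (T^[n] x) / nF m (T^[n] x)) ≤
      Real.log (mE (n + m) x / nF (n + m) x) := by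
  have hpos : ∀ n x, 0 < mE n x / nF n x := fun n x => div_pos (hmEpos n x) (hnFpos n x)
  rw [← Real.log_mul (hpos n x).ne' (hpos m _).ne', div_mul_div_comm]
  exact Real.log_le_log
    (div_pos (mul_pos (hmEpos n x) (hmEpos m _)) (mul_pos (hnFpos n x) (hnFpos m _)))
    (div_le_div₀ (hmEpos _ x).le (hmEsup n m x) (hnFpos _ x) (hnFsub n m x))

theorem mul_le_birkhoffSum_of_birkhoffSum_indicator_le {g : X → ℝ} {s : Set X} {a c θ : ℝ}
    (hgood : ∀ y ∉ s, a ≤ g y) (hbad : ∀ y, c ≤ g y) (hca : c ≤ a) {k : ℕ} {x : X}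
    (hfreq : birkhoffSum T (s.indicator 1) k x ≤ θ * k) :
    (a - θ * (a - c)) * k ≤ birkhoffSum T g k x := by
  have hpt : ∀ y, a - (a - c) * s.indicator 1 y ≤ g y := by
    intro y
    by_cases hy : y ∈ s
    · simpa [hy] using hbad y
    · simpa [hy] using hgood y hy
  calc (a - θ * (a - c)) * k ≤ a * k - (a - c) * birkhoffSum T (s.indicator 1) k x := by
        nlinarith [mul_le_mul_of_nonneg_left hfreq (sub_nonneg.2 hca)]
    _ = ∑ j ∈ Finset.range k, (a - (a - c) * s.indicator 1 (T^[j] x)) := by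
        simp [birkhoffSum, Finset.sum_sub_distrib, Finset.mul_sum, mul_comm]
    _ ≤ birkhoffSum T g k x := Finset.sum_le_sum fun j _ => hpt _

theorem exp_pow_le_prod_of_mul_le_birkhoffSum_log {r : X → ℝ} (hr : ∀ x, 0 < r x) {β : ℝ}
    {k : ℕ} {x : X} (h : β * k ≤ birkhoffSum T (fun y => Real.log (r y)) k x) :
    Real.exp β ^ k ≤ ∏ j ∈ Finset.range k, r (T^[j] x) := by
  rw [← Real.exp_nat_mul, mul_comm]
  calc Real.exp (β * k) ≤ Real.exp (birkhoffSum T (fun y => Real.log (r y)) k x) :=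
        Real.exp_le_exp.2 h
    _ = ∏ j ∈ Finset.range k, r (T^[j] x) := by
        simp only [birkhoffSum, Real.exp_sum, Real.exp_log (hr _)]

end

namespace MeasureTheory

section MaximalErgodic

variable {X : Type*} {T : X → X} {φ : X → ℝ}

noncomputable def birkhoffMax (T : X → X) (φ : X → ℝ) (N : ℕ) : X → ℝ :=
  (Finset.range (N + 1)).sup' Finset.nonempty_range_add_one (birkhoffSum T φ)

theorem birkhoffSum_le_birkhoffMax {k N : ℕ} (hk : k ≤ N) (x : X) :
    birkhoffSum T φ k x ≤ birkhoffMax T φ N x := by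
  rw [birkhoffMax, Finset.sup'_apply]
  exact Finset.le_sup' (fun k => birkhoffSum T φ k x) (Finset.mem_range_succ_iff.2 hk)

theorem birkhoffMax_nonneg (N : ℕ) (x : X) : 0 ≤ birkhoffMax T φ N x := by
  simpa using birkhoffSum_le_birkhoffMax (T := T) (φ := φ) (Nat.zero_le N) x

theorem birkhoffMax_pos_iff {N : ℕ} {x : X} :
    0 < birkhoffMax T φ N x ↔ ∃ k ≤ N, 0 < birkhoffSum T φ k x := by
  refine ⟨fun h => ?_, fun ⟨k, hk, h⟩ => h.trans_le (birkhoffSum_le_birkhoffMax hk x)⟩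
  obtain ⟨k, hk, hmax⟩ := Finset.exists_mem_eq_sup' Finset.nonempty_range_add_one
    (fun k => birkhoffSum T φ k x)
  rw [birkhoffMax, Finset.sup'_apply, hmax] at h
  exact ⟨k, Finset.mem_range_succ_iff.1 hk, h⟩

theorem birkhoffMax_le_add_birkhoffMax_apply {N : ℕ} {x : X} (h : 0 < birkhoffMax T φ N x) :
    birkhoffMax T φ N x ≤ φ x + birkhoffMax T φ N (T x) := by
  obtain ⟨k, hk, hmax⟩ := Finset.exists_mem_eq_sup' Finset.nonempty_range_add_one
    (fun k => birkhoffSum T φ k x)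
  rw [birkhoffMax, Finset.sup'_apply, hmax] at h ⊢
  obtain _ | k := k
  · simp at h
  · rw [birkhoffSum_succ']
    exact add_le_add_right
      (birkhoffSum_le_birkhoffMax (by simp at hk; omega) (T x)) _

variable [MeasurableSpace X] {μ : Measure X}

theorem measurable_birkhoffMax (hT : Measurable T) (hφ : Measurable φ) (N : ℕ) :
    Measurable (birkhoffMax T φ N) :=
  Finset.measurable_range_sup' fun _ _ =>
    Finset.measurable_sum _ fun j _ => hφ.comp (hT.iterate j)

theorem integrable_birkhoffMax (hT : MeasurePreserving T μ μ) (hφ : Integrable φ μ) (N : ℕ) :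
    Integrable (birkhoffMax T φ N) μ :=
  Finset.sup'_induction (p := (Integrable · μ)) _ _ (fun _ hf _ hg => hf.sup hg) fun _ _ =>
    integrable_finsetSum _ fun j _ => (hT.iterate j).integrable_comp_of_integrable hφ

/-- Garsia's form of the maximal ergodic theorem. -/
theorem setIntegral_birkhoffMax_pos_nonneg (hT : MeasurePreserving T μ μ) (hφm : Measurable φ)
    (hφ : Integrable φ μ) (N : ℕ) :
    0 ≤ ∫ x in {x | 0 < birkhoffMax T φ N x}, φ x ∂μ := by
  set M := birkhoffMax T φ N
  set E := {x | 0 < M x}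
  have hMm : Measurable M := measurable_birkhoffMax hT.measurable hφm N
  have hM : Integrable M μ := integrable_birkhoffMax hT hφ N
  have hMT : Integrable (fun x => M (T x)) μ := hT.integrable_comp_of_integrable hM
  have hE : MeasurableSet E := measurableSet_lt measurable_const hMm
  have hpt : ∀ x, M x - M (T x) ≤ E.indicator φ x := by
    intro x
    by_cases hx : x ∈ E
    · rw [Set.indicator_of_mem hx]
      linarith [birkhoffMax_le_add_birkhoffMax_apply (N := N) hx]
    · rw [Set.indicator_of_notMem hx]
      linarith [birkhoffMax_nonneg (T := T) (φ := φ) N (T x),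
        not_lt.1 (show ¬ 0 < M x from hx)]
  have hinv : ∫ x, M (T x) ∂μ = ∫ x, M x ∂μ := by
    rw [← integral_map hT.measurable.aemeasurable
      (by rw [hT.map_eq]; exact hMm.aestronglyMeasurable), hT.map_eq]
  calc (0 : ℝ) = ∫ x, (M x - M (T x)) ∂μ := by rw [integral_sub hM hMT, hinv, sub_self]
    _ ≤ ∫ x, E.indicator φ x ∂μ := integral_mono (hM.sub hMT) (hφ.indicator hE) hpt
    _ = ∫ x in E, φ x ∂μ := integral_indicator hE

theorem MeasurePreserving.measure_exists_lt_birkhoffSum_indicator_le [IsFiniteMeasure μ]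
    (hT : MeasurePreserving T μ μ) {s : Set X} (hs : MeasurableSet s) {θ : ℝ} (hθ : 0 < θ) :
    μ {x | ∃ k : ℕ, θ * k < birkhoffSum T (s.indicator 1) k x} ≤ μ s / ENNReal.ofReal θ := by
  set φ : X → ℝ := s.indicator 1 - fun _ => θ
  have hφm : Measurable φ := (measurable_one.indicator hs).sub measurable_const
  have hφ : Integrable φ μ := ((integrable_const 1).indicator hs).sub (integrable_const θ)
  have hsum : ∀ k x, birkhoffSum T φ k x = birkhoffSum T (s.indicator 1) k x - θ * k := by
    intro k x
    simp [φ, birkhoffSum, mul_comm]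
  set E : ℕ → Set X := fun N => {x | 0 < birkhoffMax T φ N x}
  have hmono : Monotone E := fun N N' hN x hx => by
    obtain ⟨k, hk, hpos⟩ := birkhoffMax_pos_iff.1 hx
    exact birkhoffMax_pos_iff.2 ⟨k, hk.trans hN, hpos⟩
  have hunion : {x | ∃ k : ℕ, θ * k < birkhoffSum T (s.indicator 1) k x} = ⋃ N, E N := by
    ext x
    simp only [Set.mem_ofPred_eq, Set.mem_iUnion, E, birkhoffMax_pos_iff, hsum, sub_pos]
    exact ⟨fun ⟨k, hk⟩ => ⟨k, k, le_rfl, hk⟩, fun ⟨_, k, _, hk⟩ => ⟨k, hk⟩⟩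
  have hind : Integrable (s.indicator 1 : X → ℝ) μ := (integrable_const 1).indicator hs
  have hreal : ∀ N, θ * μ.real (E N) ≤ μ.real s := by
    intro N
    have hGarsia := setIntegral_birkhoffMax_pos_nonneg hT hφm hφ N
    have hsplit : ∫ x in E N, φ x ∂μ = ∫ x in E N, s.indicator 1 x ∂μ - θ * μ.real (E N) := by
      rw [mul_comm, ← smul_eq_mul, ← setIntegral_const, ← integral_sub hind.integrableOn
        (integrableOn_const (measure_ne_top μ _))]
      rfl
    have hle : ∫ x in E N, s.indicator 1 x ∂μ ≤ μ.real s := by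
      rw [← integral_indicator_one hs]
      exact setIntegral_le_integral hind
        (.of_forall (Set.indicator_nonneg fun _ _ => zero_le_one))
    linarith
  rw [hunion, hmono.measure_iUnion]
  refine iSup_le fun N => ?_
  rw [← ofReal_measureReal, ← ofReal_measureReal (μ := μ) (s := s),
    ← ENNReal.ofReal_div_of_pos hθ]
  exact ENNReal.ofReal_le_ofReal ((le_div_iff₀ hθ).2 (by linarith [hreal N]))

end MaximalErgodic

section

variable {X : Type*} [MeasurableSpace X] {μ : Measure X}

theorem measurableSet_setOf_forall_ge {p : ℕ → X → Prop} (hp : ∀ n, MeasurableSet {x | p n x})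
    (N : ℕ) : MeasurableSet {x | ∀ n ≥ N, p n x} := by
  simpa only [Set.ofPred_forall] using
    MeasurableSet.iInter fun n => MeasurableSet.iInter fun _ => hp n

theorem tendsto_measure_compl_setOf_forall_ge [IsFiniteMeasure μ] {p : ℕ → X → Prop}
    (hp : ∀ n, MeasurableSet {x | p n x}) (h : ∀ᵐ x ∂μ, ∀ᶠ n in atTop, p n x) :
    Tendsto (fun N => μ {x | ∀ n ≥ N, p n x}ᶜ) atTop (𝓝 0) := by
  have hanti : Antitone fun N => {x | ∀ n ≥ N, p n x}ᶜ :=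
    fun N N' hN => Set.compl_subset_compl.2 fun x hx n hn => hx n (hN.trans hn)
  have hnull : μ (⋂ N, {x | ∀ n ≥ N, p n x}ᶜ) = 0 := by
    rw [← Set.compl_iUnion]
    exact ae_iff.1 (h.mono fun x hx => Set.mem_iUnion.2 (eventually_atTop.1 hx))
  simpa [hnull, Function.comp_def] using tendsto_measure_iInter_atTop
    (fun N => (measurableSet_setOf_forall_ge hp N).compl.nullMeasurableSet) hanti
    ⟨0, measure_ne_top μ _⟩

theorem tendsto_measure_one_of_tendsto_measure_compl {ι : Type*} [IsProbabilityMeasure μ]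
    {s : ι → Set X} {l : Filter ι} (h : Tendsto (fun i => μ (s i)ᶜ) l (𝓝 0)) :
    Tendsto (fun i => μ (s i)) l (𝓝 1) := by
  have hlower : Tendsto (fun i => 1 - μ (s i)ᶜ) l (𝓝 1) := by
    simpa using ENNReal.Tendsto.sub tendsto_const_nhds h (.inl ENNReal.one_ne_top)
  refine tendsto_of_tendsto_of_tendsto_of_le_of_le hlower tendsto_const_nhds (fun i => ?_)
    fun _ => prob_le_one (μ := μ)
  rw [tsub_le_iff_right, ← measure_univ (μ := μ)]
  exact measure_univ_le_add_compl _

theorem MeasurePreserving.tendsto_measure_compl_forall_mul_le_birkhoffSum_iterate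
    [IsFiniteMeasure μ] {T : X → X} (hT : MeasurePreserving T μ μ) {g : ℕ → X → ℝ}
    (hg : ∀ n, Measurable (g n)) {c : ℝ} (hc : ∀ n, 1 ≤ n → ∀ x, c * n ≤ g n x) {χ b : ℝ}
    (hχ : ∀ᵐ x ∂μ, Tendsto (fun n : ℕ => g n x / n) atTop (𝓝 χ)) (hb : b < χ) :
    Tendsto (fun ℓ : ℕ => μ {x | ∀ k : ℕ, b * ℓ * k ≤ birkhoffSum T^[ℓ] (g ℓ) k x}ᶜ)
      atTop (𝓝 0) := by
  obtain ⟨a, hba, haχ⟩ := exists_between hb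
  set c' := min c b
  have hc'a : c' < a := (min_le_right _ _).trans_lt hba
  set θ := (a - b) / (a - c')
  have hθ : 0 < θ := div_pos (sub_pos.2 hba) (sub_pos.2 hc'a)
  have hθb : a - θ * (a - c') = b := by
    rw [div_mul_cancel₀ _ (sub_pos.2 hc'a).ne']; ring
  set G : ℕ → Set X := fun N => {x | ∀ n ≥ N, a * n ≤ g n x}
  have hmeas : ∀ n, MeasurableSet {x | a * n ≤ g n x} :=
    fun n => measurableSet_le measurable_const (hg n)
  have hGc : Tendsto (fun N => μ (G N)ᶜ) atTop (𝓝 0) := by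
    refine tendsto_measure_compl_setOf_forall_ge hmeas (hχ.mono fun x hx => ?_)
    filter_upwards [hx.eventually_const_lt haχ, eventually_gt_atTop 0] with n hn hn0
    exact ((lt_div_iff₀ (Nat.cast_pos.2 hn0)).1 hn).le
  have hsub : ∀ N ℓ, 1 ≤ N → N ≤ ℓ →
      {x | ∀ k : ℕ, b * ℓ * k ≤ birkhoffSum T^[ℓ] (g ℓ) k x}ᶜ ⊆
        {x | ∃ k : ℕ, θ * k < birkhoffSum T^[ℓ] ((G N)ᶜ.indicator 1) k x} := by
    intro N ℓ hN hNℓ x hx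
    by_contra hfreq
    refine hx fun k => ?_
    have hℓ : (0 : ℝ) ≤ ℓ := Nat.cast_nonneg ℓ
    have := mul_le_birkhoffSum_of_birkhoffSum_indicator_le (s := (G N)ᶜ)
      (a := a * ℓ) (c := c' * ℓ) (fun y hy => Set.notMem_compl_iff.1 hy ℓ hNℓ)
      (fun y => (mul_le_mul_of_nonneg_right (min_le_left c b) hℓ).trans
        (hc ℓ (hN.trans hNℓ) y))
      (mul_le_mul_of_nonneg_right hc'a.le hℓ) (not_lt.1 fun h => hfreq ⟨k, h⟩)
    convert this using 2
    rw [← hθb]; ring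
  have hbound : Tendsto (fun N => μ (G N)ᶜ / ENNReal.ofReal θ) atTop (𝓝 0) := by
    simpa using ENNReal.Tendsto.div_const hGc (.inr (ENNReal.ofReal_pos.2 hθ).ne')
  rw [ENNReal.tendsto_nhds_zero]
  intro ε hε
  obtain ⟨N, hNε, hN⟩ :=
    ((hbound.eventually (ge_mem_nhds hε)).and (eventually_ge_atTop 1)).exists
  filter_upwards [eventually_ge_atTop N] with ℓ hℓ
  calc _ ≤ _ := measure_mono (hsub N ℓ hN hℓ)
    _ ≤ _ := (hT.iterate ℓ).measure_exists_lt_birkhoffSum_indicator_le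
      (measurableSet_setOf_forall_ge hmeas N).compl hθ
    _ ≤ ε := hNε

end

end MeasureTheory

/-- `mE n x` stands for `m(Df^n|_{E(x)})` and `nF n x` for `‖Df^n|_{F(x)}‖`. -/
theorem stmt_6_general {X : Type*} [MetricSpace X] [CompactSpace X]
    [MeasurableSpace X] [BorelSpace X]
    (f : X → X)
    (μ : Measure X) [IsProbabilityMeasure μ] (herg : Ergodic f μ)
    (mE nF : ℕ → X → ℝ)
    (hmEpos : ∀ n x, 0 < mE n x) (hnFpos : ∀ n x, 0 < nF n x)
    (hmEcont : ∀ n, Continuous (mE n)) (hnFcont : ∀ n, Continuous (nF n))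
    (hmEsup : ∀ n m x, mE n x * mE m (f^[n] x) ≤ mE (n + m) x)
    (hnFsub : ∀ n m x, nF (n + m) x ≤ nF n x * nF m (f^[n] x))
    (χE χF : ℝ)
    (hχE : ∀ᵐ x ∂μ, Tendsto (fun n => Real.log (mE n x) / n) atTop (𝓝 χE))
    (hχF : ∀ᵐ x ∂μ, Tendsto (fun n => Real.log (nF n x) / n) atTop (𝓝 χF))
    (γ₁ γ₂ : ℝ) (hγ₁ : γ₁ < χE) (hγ₂ : χF < γ₂) :
    Tendsto (fun ℓ : ℕ => μ {x | ∀ k : ℕ, 1 ≤ k →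
        Real.exp ((γ₁ - γ₂) * ℓ) ^ k ≤
          ∏ j ∈ Finset.range k, mE ℓ (f^[j * ℓ] x) / nF ℓ (f^[j * ℓ] x)})
      atTop (𝓝 1) := by
  have hratio : ∀ n x, 0 < mE n x / nF n x := fun n x => div_pos (hmEpos n x) (hnFpos n x)
  set g : ℕ → X → ℝ := fun n x => Real.log (mE n x / nF n x)
  have hg : ∀ n, Continuous (g n) := fun n =>
    ((hmEcont n).div (hnFcont n) fun x => (hnFpos n x).ne').log fun x => (hratio n x).ne'
  obtain ⟨c, hc⟩ := (isCompact_range (hg 1)).bddBelow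
  have hlower := mul_le_of_superadditive_cocycle
    (log_div_superadditive hmEpos hnFpos hmEsup hnFsub) fun x => hc ⟨x, rfl⟩
  have hχ : ∀ᵐ x ∂μ, Tendsto (fun n : ℕ => g n x / n) atTop (𝓝 (χE - χF)) := by
    filter_upwards [hχE, hχF] with x hE hF
    simpa only [g, Real.log_div (hmEpos _ x).ne' (hnFpos _ x).ne', sub_div] using hE.sub hF
  have hΛ := herg.toMeasurePreserving.tendsto_measure_compl_forall_mul_le_birkhoffSum_iterate
    (fun n => (hg n).measurable) hlower hχ (show γ₁ - γ₂ < χE - χF by linarith)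
  refine tendsto_measure_one_of_tendsto_measure_compl (tendsto_of_tendsto_of_tendsto_of_le_of_le
    tendsto_const_nhds hΛ (fun _ => zero_le) fun ℓ => measure_mono ?_)
  refine Set.compl_subset_compl.2 fun x hx k _ => ?_
  simpa only [mul_comm _ ℓ, Function.iterate_mul] using
    exp_pow_le_prod_of_mul_le_birkhoffSum_log (hratio ℓ) (hx k)

/-- Corollary 3.10 of the paper, with the derivative data along the invariant sub-bundles
abstracted as cocycles: `mE n x` stands for `m(Df^n|_{E(x)})` and `nF n x` for
`‖Df^n|_{F(x)}‖`. If `μ` is ergodic with `χ_E^-(μ) > γ₁ > γ₂ > χ_F^+(μ)`, then the measure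
of `Δ(e^{(γ₁-γ₂)ℓ}, f^ℓ, E, F)` tends to `1` as `ℓ → ∞`. -/
theorem stmt_6 {X : Type*} [MetricSpace X] [CompactSpace X]
    [MeasurableSpace X] [BorelSpace X]
    (f : X → X) (hf : Continuous f)
    (μ : Measure X) [IsProbabilityMeasure μ] (herg : Ergodic f μ)
    (mE nF : ℕ → X → ℝ)
    (hmEpos : ∀ n x, 0 < mE n x) (hnFpos : ∀ n x, 0 < nF n x)
    (hmEcont : ∀ n, Continuous (mE n)) (hnFcont : ∀ n, Continuous (nF n))
    (hmEsup : ∀ n m x, mE n x * mE m (f^[n] x) ≤ mE (n + m) x)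
    (hnFsub : ∀ n m x, nF (n + m) x ≤ nF n x * nF m (f^[n] x))
    (χE χF : ℝ)
    (hχE : ∀ᵐ x ∂μ, Tendsto (fun n => Real.log (mE n x) / n) atTop (𝓝 χE))
    (hχF : ∀ᵐ x ∂μ, Tendsto (fun n => Real.log (nF n x) / n) atTop (𝓝 χF))
    (hgap : χF < χE)
    (γ₁ γ₂ : ℝ) (hγ₁ : γ₁ < χE) (hγ₁₂ : γ₂ < γ₁) (hγ₂ : χF < γ₂) :
    Tendsto (fun ℓ : ℕ => μ {x | ∀ k : ℕ, 1 ≤ k →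
        Real.exp ((γ₁ - γ₂) * ℓ) ^ k ≤
          ∏ j ∈ Finset.range k, mE ℓ (f^[j * ℓ] x) / nF ℓ (f^[j * ℓ] x)})
      atTop (𝓝 1) :=
  stmt_6_general f μ herg mE nF hmEpos hnFpos hmEcont hnFcont hmEsup hnFsub χE χF hχE hχF γ₁ γ₂ hγ₁
    hγ₂
end
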